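/- Let (X_k)_{k∈ℤ} be nonzero vectors in ℝⁿ and (A_k)_{k∈ℤ} linear maps ℝⁿ → ℝⁿ with A_k X_k = X_{k+1} for all k. Let P_k denote the orthogonal projection of ℝⁿ onto the orthogonal complement V_k of X_k (so ker P_k = span{X_k}). Suppose there exists L₁ > 0 such that for every sequence (z_k)_{k∈ℤ} with |z_k| ≤ 1 and every natural number N there exist real numbers s_k and vectors x_k with |x_k| ≤ L₁ satisfying x_{k+1} = A_k x_k + s_k X_{k+1} + z_{k+1} for all k ∈ [−N, N−1]. Then for every sequence (b_k)_{k∈ℤ} with b_k ∈ V_k and |b_k| ≤ 1 for all k, there exists a sequence (v_k)_{k∈ℤ} with v_k ∈ V_k, |v_k| ≤ L₁, and v_{k+1} = P_{k+1}(A_k v_k) + b_{k+1} for all k ∈ ℤ. -/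

import Mathlib

/-!
Project a solution `x` of the finite system onto the `V_k`. Since `A_k` maps `span X_k` into
`span X_{k+1}`, `P_{k+1} A_k P_k = P_{k+1} A_k`; moreover `P_{k+1}` kills `s_k X_{k+1}` and fixes
`b_{k+1}`, so `P_k x_k` solves the projected system on the window. Extended by `0` outside the
window, these solutions lie in the compact product `∏_k (closedBall 0 L₁ ∩ V_k)`, and a cluster
point as the window grows solves every equation, each being a closed condition.
-/

open Set

noncomputable section

/-- Euclidean space ℝⁿ. -/
abbrev Euc (n : ℕ) := EuclideanSpace ℝ (Fin n)

/-- The orthogonal projection of ℝⁿ onto the orthogonal complement of `u`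
(its kernel is `span {u}` when `u ≠ 0`). -/
def projPerp {n : ℕ} (u : Euc n) : Euc n →L[ℝ] Euc n :=
  ((ℝ ∙ u)ᗮ).subtypeL.comp (Submodule.orthogonalProjection ((ℝ ∙ u)ᗮ))

open Filter

namespace Submodule

variable {𝕜 E F : Type*} [RCLike 𝕜] [NormedAddCommGroup E] [InnerProductSpace 𝕜 E]
  [NormedAddCommGroup F] [InnerProductSpace 𝕜 F]

theorem starProjection_orthogonal_map_starProjection_orthogonal {K : Submodule 𝕜 E}
    {K' : Submodule 𝕜 F} [K.HasOrthogonalProjection] [K'.HasOrthogonalProjection]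
    (T : E →ₗ[𝕜] F) (hT : K.map T ≤ K') (y : E) :
    K'ᗮ.starProjection (T (Kᗮ.starProjection y)) = K'ᗮ.starProjection (T y) := by
  have hK : K'ᗮ.starProjection (T (K.starProjection y)) = 0 := by
    rw [starProjection_apply_eq_zero_iff, orthogonal_orthogonal]
    exact hT (mem_map_of_mem (K.starProjection_apply_mem y))
  rw [eq_sub_of_add_eq' (K.starProjection_add_starProjection_orthogonal y), map_sub, map_sub, hK,
    sub_zero]

theorem starProjection_orthogonal_span_singleton_of_eq_map_add {u w x y c : E} (T : E →ₗ[𝕜] E)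
    (hTu : T u = w) (hc : c ∈ (𝕜 ∙ w)ᗮ) (s : 𝕜) (hy : y = T x + s • w + c) :
    (𝕜 ∙ w)ᗮ.starProjection y = (𝕜 ∙ w)ᗮ.starProjection (T ((𝕜 ∙ u)ᗮ.starProjection x)) + c := by
  have hTspan : (𝕜 ∙ u).map T ≤ 𝕜 ∙ w := by
    rw [map_span, image_singleton, hTu]
  have hw : (𝕜 ∙ w)ᗮ.starProjection w = 0 := by
    rw [starProjection_apply_eq_zero_iff, orthogonal_orthogonal]
    exact mem_span_singleton_self w
  rw [starProjection_orthogonal_map_starProjection_orthogonal T hTspan, hy, map_add, map_add,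
    map_smul, hw, smul_zero, add_zero, starProjection_eq_self_iff.mpr hc]

end Submodule

theorem projPerp_eq_starProjection {n : ℕ} (u : Euc n) : projPerp u = (ℝ ∙ u)ᗮ.starProjection :=
  rfl

theorem IsCompact.exists_forall_mem_of_eventually_mem {X ι α : Type*} [TopologicalSpace X]
    {l : Filter α} [l.NeBot] {S : Set X} (hS : IsCompact S) {C : ι → Set X}
    (hC : ∀ i, IsClosed (C i)) {x : α → X} (hxS : ∀ᶠ a in l, x a ∈ S)
    (hxC : ∀ i, ∀ᶠ a in l, x a ∈ C i) :
    ∃ y ∈ S, ∀ i, y ∈ C i := by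
  obtain ⟨y, hyS, hy⟩ := hS.exists_mapClusterPt (le_principal_iff.2 hxS)
  exact ⟨y, hyS, fun i => (hC i).mem_of_mapClusterPt hy (hxC i)⟩

theorem exists_projPerp_solution_on_window {n : ℕ} {Xv : ℤ → Euc n} {A : ℤ → (Euc n →L[ℝ] Euc n)}
    (hA : ∀ k, A k (Xv k) = Xv (k + 1)) {L₁ : ℝ} (hL₁ : 0 ≤ L₁) {b : ℤ → Euc n}
    (hb : ∀ k, b k ∈ (ℝ ∙ Xv k)ᗮ) {N : ℕ} {s : ℤ → ℝ} {x : ℤ → Euc n}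
    (hx : ∀ k ∈ Icc (-(N : ℤ)) (N : ℤ), ‖x k‖ ≤ L₁)
    (hxeq : ∀ k ∈ Icc (-(N : ℤ)) ((N : ℤ) - 1),
      x (k + 1) = A k (x k) + s k • Xv (k + 1) + b (k + 1)) :
    ∃ v : ℤ → Euc n, (∀ k, v k ∈ Metric.closedBall 0 L₁ ∩ (ℝ ∙ Xv k)ᗮ) ∧
      ∀ k ∈ Icc (-(N : ℤ)) ((N : ℤ) - 1),
        v (k + 1) = projPerp (Xv (k + 1)) (A k (v k)) + b (k + 1) := by
  refine ⟨(Icc (-(N : ℤ)) N).indicator fun k => projPerp (Xv k) (x k), fun k => ?_, ?_⟩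
  · by_cases hk : k ∈ Icc (-(N : ℤ)) N
    · rw [indicator_of_mem hk, projPerp_eq_starProjection]
      exact ⟨mem_closedBall_zero_iff.2 <|
        (Submodule.norm_starProjection_apply_le _ _).trans (hx k hk),
        Submodule.starProjection_apply_mem _ _⟩
    · rw [indicator_of_notMem hk]
      exact ⟨Metric.mem_closedBall_self hL₁, Submodule.zero_mem _⟩
  · rintro k ⟨hlo, hhi⟩
    rw [indicator_of_mem (show k ∈ Icc (-(N : ℤ)) N from ⟨hlo, by omega⟩),
      indicator_of_mem (show k + 1 ∈ Icc (-(N : ℤ)) N from ⟨by omega, by omega⟩)]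
    simp only [projPerp_eq_starProjection]
    exact Submodule.starProjection_orthogonal_span_singleton_of_eq_map_add
      (A k : Euc n →ₗ[ℝ] Euc n) (hA k) (hb (k + 1)) (s k) (hxeq k ⟨hlo, hhi⟩)

theorem statement1_general {n : ℕ} (Xv : ℤ → Euc n)
    (A : ℤ → (Euc n →L[ℝ] Euc n)) (hA : ∀ k, A k (Xv k) = Xv (k + 1))
    (L₁ : ℝ) (hL₁ : 0 < L₁)
    (hsolv : ∀ z : ℤ → Euc n, (∀ k, ‖z k‖ ≤ 1) → ∀ N : ℕ,
      ∃ (s : ℤ → ℝ) (x : ℤ → Euc n),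
        (∀ k ∈ Icc (-(N : ℤ)) (N : ℤ), ‖x k‖ ≤ L₁) ∧
        ∀ k ∈ Icc (-(N : ℤ)) ((N : ℤ) - 1),
          x (k + 1) = A k (x k) + s k • Xv (k + 1) + z (k + 1)) :
    ∀ b : ℤ → Euc n, (∀ k, b k ∈ (ℝ ∙ Xv k)ᗮ) → (∀ k, ‖b k‖ ≤ 1) →
      ∃ v : ℤ → Euc n, ∀ k : ℤ,
        v k ∈ (ℝ ∙ Xv k)ᗮ ∧ ‖v k‖ ≤ L₁ ∧
        v (k + 1) = projPerp (Xv (k + 1)) (A k (v k)) + b (k + 1) := by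
  intro b hb hb₁
  choose w hw hweq using fun N : ℕ =>
    let ⟨_, _, hx, hxeq⟩ := hsolv b hb₁ N
    exists_projPerp_solution_on_window hA hL₁.le hb hx hxeq
  have hS : IsCompact (univ.pi fun k => Metric.closedBall (0 : Euc n) L₁ ∩ (ℝ ∙ Xv k)ᗮ) :=
    isCompact_univ_pi fun k =>
      (isCompact_closedBall 0 L₁).inter_right (Submodule.closed_of_finiteDimensional _)
  have hC (k : ℤ) :
      IsClosed {v : ℤ → Euc n | v (k + 1) = projPerp (Xv (k + 1)) (A k (v k)) + b (k + 1)} :=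
    isClosed_eq (continuous_apply _) <|
      ((projPerp _).continuous.comp ((A k).continuous.comp (continuous_apply k))).add
        continuous_const
  obtain ⟨v, hv, hveq⟩ := hS.exists_forall_mem_of_eventually_mem (l := atTop) hC
    (.of_forall fun N k _ => hw N k)
    fun k => (eventually_gt_atTop k.natAbs).mono fun N hN => hweq N k ⟨by omega, by omega⟩
  exact ⟨v, fun k => ⟨(hv k trivial).2, mem_closedBall_zero_iff.1 (hv k trivial).1, hveq k⟩⟩

/-- Corollary 4.4 of the paper: from uniformly bounded solvability of the
finite systems `x_{k+1} = A_k x_k + s_k X_{k+1} + z_{k+1}` one obtains bounded solutions of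
`v_{k+1} = P_{k+1}(A_k v_k) + b_{k+1}` on all of ℤ, with `v_k ⟂ X_k`. -/
theorem statement1 {n : ℕ} (Xv : ℤ → Euc n) (hXv : ∀ k, Xv k ≠ 0)
    (A : ℤ → (Euc n →L[ℝ] Euc n)) (hA : ∀ k, A k (Xv k) = Xv (k + 1))
    (L₁ : ℝ) (hL₁ : 0 < L₁)
    (hsolv : ∀ z : ℤ → Euc n, (∀ k, ‖z k‖ ≤ 1) → ∀ N : ℕ,
      ∃ (s : ℤ → ℝ) (x : ℤ → Euc n),
        (∀ k ∈ Icc (-(N : ℤ)) (N : ℤ), ‖x k‖ ≤ L₁) ∧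
        ∀ k ∈ Icc (-(N : ℤ)) ((N : ℤ) - 1),
          x (k + 1) = A k (x k) + s k • Xv (k + 1) + z (k + 1)) :
    ∀ b : ℤ → Euc n, (∀ k, b k ∈ (ℝ ∙ Xv k)ᗮ) → (∀ k, ‖b k‖ ≤ 1) →
      ∃ v : ℤ → Euc n, ∀ k : ℤ,
        v k ∈ (ℝ ∙ Xv k)ᗮ ∧ ‖v k‖ ≤ L₁ ∧
        v (k + 1) = projPerp (Xv (k + 1)) (A k (v k)) + b (k + 1) :=
  statement1_general Xv A hA L₁ hL₁ hsolv
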